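/- arXiv:1908.00339 — 5 statements merged into one kernel-verified Lean document; each statement's English description precedes it below -/
import Mathlib

section
/- For the shallow water system with porosity, the energy density E = (1/2)|v|² + g(z + h/2) satisfies the conservative balance law ∂ₜ(θhE) + ∂_b(θh v^b (E + gh/2)) = M(-(1/2)|v|² + w) - K|v|³, whenever (h,v) is a smooth solution of ∂ₜ(θh) + ∂_b(θh v^b) = M and ∂ₜ(θh v_a) + ∂_b(θh v_a v^b) + θh ∂_a w = -K|v|v_a for a=1,2, where w = g(z+h). -/
/-- time partial derivative of a function of (t, x, y) -/
noncomputable def pT (f : ℝ → ℝ → ℝ → ℝ) (t x y : ℝ) : ℝ := deriv (fun s => f s x y) t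
/-- x partial derivative -/
noncomputable def pX (f : ℝ → ℝ → ℝ → ℝ) (t x y : ℝ) : ℝ := deriv (fun s => f t s y) x
/-- y partial derivative -/
noncomputable def pY (f : ℝ → ℝ → ℝ → ℝ) (t x y : ℝ) : ℝ := deriv (fun s => f t x s) y

lemma sliceT {f : ℝ → ℝ → ℝ → ℝ}
    (hf : ContDiff ℝ (⊤ : ℕ∞) (fun p : ℝ × ℝ × ℝ => f p.1 p.2.1 p.2.2)) (t x y : ℝ) :
    HasDerivAt (fun s => f s x y) (pT f t x y) t :=
  ((by have H := ((hf.differentiable (WithTop.coe_ne_zero.mpr WithTop.top_ne_zero) (t, x, y)).comp t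
      ((differentiableAt_id.prodMk (differentiableAt_const (x, y))) : DifferentiableAt ℝ _ t)); exact H) :
    DifferentiableAt ℝ (fun s => f s x y) t).hasDerivAt

lemma sliceX {f : ℝ → ℝ → ℝ → ℝ}
    (hf : ContDiff ℝ (⊤ : ℕ∞) (fun p : ℝ × ℝ × ℝ => f p.1 p.2.1 p.2.2)) (t x y : ℝ) :
    HasDerivAt (fun s => f t s y) (pX f t x y) x :=
  ((by have H := ((hf.differentiable (WithTop.coe_ne_zero.mpr WithTop.top_ne_zero) (t, x, y)).comp x
      (((differentiableAt_const t).prodMk (differentiableAt_id.prodMk (differentiableAt_const y))) : DifferentiableAt ℝ _ x)); exact H) :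
    DifferentiableAt ℝ (fun s => f t s y) x).hasDerivAt

lemma sliceY {f : ℝ → ℝ → ℝ → ℝ}
    (hf : ContDiff ℝ (⊤ : ℕ∞) (fun p : ℝ × ℝ × ℝ => f p.1 p.2.1 p.2.2)) (t x y : ℝ) :
    HasDerivAt (fun s => f t x s) (pY f t x y) y :=
  ((by have H := ((hf.differentiable (WithTop.coe_ne_zero.mpr WithTop.top_ne_zero) (t, x, y)).comp y
      (((differentiableAt_const t).prodMk ((differentiableAt_const x).prodMk differentiableAt_id)) : DifferentiableAt ℝ _ y)); exact H) :
    DifferentiableAt ℝ (fun s => f t x s) y).hasDerivAt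

lemma slice2X {f : ℝ → ℝ → ℝ} (hf : ContDiff ℝ (⊤ : ℕ∞) (fun p : ℝ × ℝ => f p.1 p.2)) (x y : ℝ) :
    HasDerivAt (fun s => f s y) (deriv (fun s => f s y) x) x :=
  ((by have H := ((hf.differentiable (WithTop.coe_ne_zero.mpr WithTop.top_ne_zero) (x, y)).comp x
      ((differentiableAt_id.prodMk (differentiableAt_const y)) : DifferentiableAt ℝ _ x)); exact H) :
    DifferentiableAt ℝ (fun s => f s y) x).hasDerivAt

lemma slice2Y {f : ℝ → ℝ → ℝ} (hf : ContDiff ℝ (⊤ : ℕ∞) (fun p : ℝ × ℝ => f p.1 p.2)) (x y : ℝ) :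
    HasDerivAt (fun s => f x s) (deriv (fun s => f x s) y) y :=
  ((by have H := ((hf.differentiable (WithTop.coe_ne_zero.mpr WithTop.top_ne_zero) (x, y)).comp y
      (((differentiableAt_const x).prodMk differentiableAt_id) : DifferentiableAt ℝ _ y)); exact H) :
    DifferentiableAt ℝ (fun s => f x s) y).hasDerivAt

/-- energy balance law for the shallow water system with porosity. -/
theorem energy_balance
    (g : ℝ) (hg : 0 < g)
    (θ z : ℝ → ℝ → ℝ)
    (h v1 v2 M K : ℝ → ℝ → ℝ → ℝ)
    (hθrange : ∀ x y, θ x y ∈ Set.Icc (0:ℝ) 1)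
    (hKpos : ∀ t x y, 0 ≤ K t x y)
    (hhpos : ∀ t x y, 0 < h t x y)
    (hθsm : ContDiff ℝ (⊤ : ℕ∞) (fun p : ℝ × ℝ => θ p.1 p.2))
    (hzsm : ContDiff ℝ (⊤ : ℕ∞) (fun p : ℝ × ℝ => z p.1 p.2))
    (hhsm : ContDiff ℝ (⊤ : ℕ∞) (fun p : ℝ × ℝ × ℝ => h p.1 p.2.1 p.2.2))
    (hv1sm : ContDiff ℝ (⊤ : ℕ∞) (fun p : ℝ × ℝ × ℝ => v1 p.1 p.2.1 p.2.2))
    (hv2sm : ContDiff ℝ (⊤ : ℕ∞) (fun p : ℝ × ℝ × ℝ => v2 p.1 p.2.1 p.2.2))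
    -- mass balance: ∂ₜ(θh) + ∂_b(θ h v^b) = M
    (hmass : ∀ t x y,
      pT (fun t x y => θ x y * h t x y) t x y
        + pX (fun t x y => θ x y * h t x y * v1 t x y) t x y
        + pY (fun t x y => θ x y * h t x y * v2 t x y) t x y = M t x y)
    -- momentum balance, a = 1
    (hmom1 : ∀ t x y,
      pT (fun t x y => θ x y * h t x y * v1 t x y) t x y
        + pX (fun t x y => θ x y * h t x y * v1 t x y * v1 t x y) t x y
        + pY (fun t x y => θ x y * h t x y * v1 t x y * v2 t x y) t x y
        + θ x y * h t x y * pX (fun t x y => g * (z x y + h t x y)) t x y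
      = - K t x y * Real.sqrt ((v1 t x y)^2 + (v2 t x y)^2) * v1 t x y)
    -- momentum balance, a = 2
    (hmom2 : ∀ t x y,
      pT (fun t x y => θ x y * h t x y * v2 t x y) t x y
        + pX (fun t x y => θ x y * h t x y * v2 t x y * v1 t x y) t x y
        + pY (fun t x y => θ x y * h t x y * v2 t x y * v2 t x y) t x y
        + θ x y * h t x y * pY (fun t x y => g * (z x y + h t x y)) t x y
      = - K t x y * Real.sqrt ((v1 t x y)^2 + (v2 t x y)^2) * v2 t x y) :
    -- energy equation with E = (1/2)|v|² + g(z + h/2), w = g(z+h)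
    ∀ t x y,
      pT (fun t x y => θ x y * h t x y *
          ((1/2) * ((v1 t x y)^2 + (v2 t x y)^2) + g * (z x y + h t x y / 2))) t x y
        + pX (fun t x y => θ x y * h t x y * v1 t x y *
          (((1/2) * ((v1 t x y)^2 + (v2 t x y)^2) + g * (z x y + h t x y / 2))
            + g * h t x y / 2)) t x y
        + pY (fun t x y => θ x y * h t x y * v2 t x y *
          (((1/2) * ((v1 t x y)^2 + (v2 t x y)^2) + g * (z x y + h t x y / 2))
            + g * h t x y / 2)) t x y
      = M t x y * (-(1/2) * ((v1 t x y)^2 + (v2 t x y)^2) + g * (z x y + h t x y))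
        - K t x y * (Real.sqrt ((v1 t x y)^2 + (v2 t x y)^2))^3 := by
  intro t x y
  have Hht := sliceT hhsm t x y
  have HhX := sliceX hhsm t x y
  have HhY := sliceY hhsm t x y
  have Hv1t := sliceT hv1sm t x y
  have Hv1X := sliceX hv1sm t x y
  have Hv1Y := sliceY hv1sm t x y
  have Hv2t := sliceT hv2sm t x y
  have Hv2X := sliceX hv2sm t x y
  have Hv2Y := sliceY hv2sm t x y
  have HθX := slice2X hθsm x y
  have HθY := slice2Y hθsm x y
  have HzX := slice2X hzsm x y
  have HzY := slice2Y hzsm x y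
  have hm := hmass t x y
  have h1 := hmom1 t x y
  have h2 := hmom2 t x y
  simp only [pT, pX, pY] at hm h1 h2 ⊢
  rw [(Hht.const_mul (θ x y)).deriv, ((HθX.fun_mul HhX).fun_mul Hv1X).deriv,
      ((HθY.fun_mul HhY).fun_mul Hv2Y).deriv] at hm
  rw [((Hht.const_mul (θ x y)).fun_mul Hv1t).deriv,
      (((HθX.fun_mul HhX).fun_mul Hv1X).fun_mul Hv1X).deriv,
      (((HθY.fun_mul HhY).fun_mul Hv1Y).fun_mul Hv2Y).deriv,
      ((HzX.fun_add HhX).const_mul g).deriv] at h1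
  rw [((Hht.const_mul (θ x y)).fun_mul Hv2t).deriv,
      (((HθX.fun_mul HhX).fun_mul Hv2X).fun_mul Hv1X).deriv,
      (((HθY.fun_mul HhY).fun_mul Hv2Y).fun_mul Hv2Y).deriv,
      ((HzY.fun_add HhY).const_mul g).deriv] at h2
  rw [((Hht.const_mul (θ x y)).fun_mul
        ((((Hv1t.fun_pow 2).fun_add (Hv2t.fun_pow 2)).const_mul (1/2)).fun_add
          (((Hht.div_const 2).const_add (z x y)).const_mul g))).deriv,
      ((((HθX.fun_mul HhX).fun_mul Hv1X).fun_mul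
        (((((Hv1X.fun_pow 2).fun_add (Hv2X.fun_pow 2)).const_mul (1/2)).fun_add
          ((HzX.fun_add (HhX.div_const 2)).const_mul g)).fun_add
          ((HhX.const_mul g).div_const 2)))).deriv,
      ((((HθY.fun_mul HhY).fun_mul Hv2Y).fun_mul
        (((((Hv1Y.fun_pow 2).fun_add (Hv2Y.fun_pow 2)).const_mul (1/2)).fun_add
          ((HzY.fun_add (HhY.div_const 2)).const_mul g)).fun_add
          ((HhY.const_mul g).div_const 2)))).deriv]
  have hr2 : (Real.sqrt ((v1 t x y)^2 + (v2 t x y)^2))^2 = (v1 t x y)^2 + (v2 t x y)^2 :=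
    Real.sq_sqrt (by positivity)
  linear_combination
    (g * (z x y + h t x y) - (1/2) * ((v1 t x y)^2 + (v2 t x y)^2)) * hm
    + v1 t x y * h1 + v2 t x y * h2
    + (K t x y * Real.sqrt ((v1 t x y)^2 + (v2 t x y)^2)) * hr2
end

section
/- If at some time t the water depth h_i(t) = 0 in a cell i and the mass source satisfies M_i ≥ 0 when h_i = 0, then d/dt(θ_i h_i)(t) ≥ 0 under the upwind semidiscrete scheme; consequently the semidiscrete ODE system preserves nonnegativity of the water depth function h. -/
/-! In a dry cell the outflow term `-θᵢ hᵢ Σ l (vₙ)⁺` vanishes together with `hᵢ`, so `σᵢ d/dt(θᵢ hᵢ)`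
reduces to the upwind inflow plus the source, both nonnegative. -/

lemma Finset.sum_mul_mul_nonneg {J R : Type*} [Semiring R] [PartialOrder R] [IsOrderedRing R]
    (N : Finset J) (a b c : J → R)
    (ha : ∀ j ∈ N, 0 ≤ a j) (hb : ∀ j ∈ N, 0 ≤ b j) (hc : ∀ j ∈ N, 0 ≤ c j) :
    0 ≤ ∑ j ∈ N, a j * b j * c j :=
  Finset.sum_nonneg fun j hj => mul_nonneg (mul_nonneg (ha j hj) (hb j hj)) (hc j hj)

theorem semidiscrete_h_positivity_general
    {J : Type*} (N : Finset J)
    (σ θi : ℝ) (hσ : 0 < σ)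
    (l : J → ℝ) (hl : ∀ j ∈ N, 0 < l j)
    (vnp vnm : J → ℝ → ℝ)                       -- (v_n)⁺ and (v_n)⁻ on each interface
    (hvnm : ∀ j ∈ N, ∀ s, 0 ≤ vnm j s)
    (θh : J → ℝ → ℝ)                            -- neighbor values θ_j h_j ≥ 0
    (hθh : ∀ j ∈ N, ∀ s, 0 ≤ θh j s)
    (hi : ℝ → ℝ) (M : ℝ → ℝ)
    -- the semidiscrete upwind mass-balance ODE in cell i
    (hODE : ∀ s, σ * deriv (fun u => θi * hi u) s
      = - θi * hi s * ∑ j ∈ N, l j * vnp j s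
        + ∑ j ∈ N, l j * θh j s * vnm j s
        + σ * M s)
    (t : ℝ) (hdry : hi t = 0) (hM : 0 ≤ M t) :
    0 ≤ deriv (fun u => θi * hi u) t := by
  have hinflow : 0 ≤ ∑ j ∈ N, l j * θh j t * vnm j t :=
    N.sum_mul_mul_nonneg _ _ _ (fun j hj => (hl j hj).le) (fun j hj => hθh j hj t)
      (fun j hj => hvnm j hj t)
  have hdry_balance : σ * deriv (fun u => θi * hi u) t
      = ∑ j ∈ N, l j * θh j t * vnm j t + σ * M t := by
    simpa [hdry] using hODE t
  have hscaled : 0 ≤ σ * deriv (fun u => θi * hi u) t :=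
    hdry_balance ▸ add_nonneg hinflow (mul_nonneg hσ.le hM)
  exact nonneg_of_mul_nonneg_right hscaled hσ

/-- h-positivity of the upwind semidiscrete scheme: if h_i(t) = 0 and
M_i(t) ≥ 0, then d/dt (θ_i h_i)(t) ≥ 0. -/
theorem semidiscrete_h_positivity
    {J : Type*} (N : Finset J)
    (σ θi : ℝ) (hσ : 0 < σ) (hθi : θi ∈ Set.Ioc (0:ℝ) 1)
    (l : J → ℝ) (hl : ∀ j ∈ N, 0 < l j)
    (vnp vnm : J → ℝ → ℝ)                       -- (v_n)⁺ and (v_n)⁻ on each interface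
    (hvnp : ∀ j ∈ N, ∀ s, 0 ≤ vnp j s)
    (hvnm : ∀ j ∈ N, ∀ s, 0 ≤ vnm j s)
    (θh : J → ℝ → ℝ)                            -- neighbor values θ_j h_j ≥ 0
    (hθh : ∀ j ∈ N, ∀ s, 0 ≤ θh j s)
    (hi : ℝ → ℝ) (M : ℝ → ℝ)
    -- the semidiscrete upwind mass-balance ODE in cell i
    (hODE : ∀ s, σ * deriv (fun u => θi * hi u) s
      = - θi * hi s * ∑ j ∈ N, l j * vnp j s
        + ∑ j ∈ N, l j * θh j s * vnm j s
        + σ * M s)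
    (t : ℝ) (hdry : hi t = 0) (hM : 0 ≤ M t) :
    0 ≤ deriv (fun u => θi * hi u) t :=
  semidiscrete_h_positivity_general N σ θi hσ l hl vnp vnm hvnm θh hθh hi M hODE t hdry hM
end

section
/- Singular stationary point (partial lake): consider the semidiscrete scheme with upwind-by-level interface value (θh)^s_{(i,j)} = θ_i h_i if w_i > w_j and θ_j h_j if w_i ≤ w_j, where w_i = g(z_i + h_i). If v_i = 0 for all cells, w_i = w̄ for all i in a subset I, and h_i = 0 with z_i > w̄/g for all i in the complement of I, then for every cell i the momentum residual Σ_{j∈N(i)} l_{(i,j)} (w_j - w_i)(θh)^s_{(i,j)} n_a|_{(i,j)} vanishes, so the state is a stationary point. -/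
/-! Every cell is either a lake cell, at level `wbar`, or dry and strictly above `wbar`.
Between two lake cells the level difference vanishes; across an interface with a dry cell the
dry cell is the higher one, so the upwind-by-level choice picks its value, which is `0`. -/

lemma level_diff_mul_upwind_eq_zero {wi wj ai aj wbar : ℝ}
    (hi : wi = wbar ∨ (ai = 0 ∧ wbar < wi)) (hj : wj = wbar ∨ (aj = 0 ∧ wbar < wj)) :
    (wj - wi) * (if wi > wj then ai else aj) = 0 := by
  split_ifs with hlt
  · rcases hi with hi | ⟨hai, -⟩
    · rcases hj with hj | ⟨-, hj⟩ <;> linarith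
    · rw [hai, mul_zero]
  · rcases hj with hj | ⟨haj, -⟩
    · rcases hi with hi | ⟨-, hi⟩
      · rw [hi, hj, sub_self, zero_mul]
      · linarith
    · rw [haj, mul_zero]

theorem singular_lake_stationary_general
    {ι : Type*}
    (N : ι → Finset ι)                       -- neighbors
    (l : ι → ι → ℝ)
    (n : ι → ι → ℝ × ℝ)                      -- unit normals
    (g : ℝ) (hg : 0 < g)
    (z h θ : ι → ℝ)
    (w : ι → ℝ) (hw : ∀ i, w i = g * (z i + h i))
    -- upwind-by-level interface value (θh)^s_{(i,j)}
    (s : ι → ι → ℝ)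
    (hs : ∀ i j, s i j = if w i > w j then θ i * h i else θ j * h j)
    (I : Finset ι) (wbar : ℝ)
    (hlake : ∀ i ∈ I, w i = wbar)
    (hdry : ∀ i ∉ I, h i = 0 ∧ z i > wbar / g) :
    ∀ i, (∑ j ∈ N i, (l i j * (w j - w i) * s i j) • n i j) = (0 : ℝ × ℝ) := by
  have hcell : ∀ i, w i = wbar ∨ (θ i * h i = 0 ∧ wbar < w i) := by
    intro i
    by_cases hi : i ∈ I
    · exact .inl (hlake i hi)
    · obtain ⟨hh, hz⟩ := hdry i hi
      refine .inr ⟨by rw [hh, mul_zero], ?_⟩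
      rw [hw i, hh, add_zero]
      exact (div_lt_iff₀' hg).mp hz
  intro i
  refine Finset.sum_eq_zero fun j _ => ?_
  rw [hs, mul_assoc, level_diff_mul_upwind_eq_zero (hcell i) (hcell j), mul_zero, zero_smul]

/-- singular stationary point (partial lake): with zero velocity,
constant free surface w̄ on the wet cells I and dry cells (h=0) with soil above the
lake level elsewhere, the free-surface gradient sum with upwind-by-level interface
values vanishes in every cell. -/
theorem singular_lake_stationary
    {ι : Type*} [Fintype ι] [DecidableEq ι]
    (N : ι → Finset ι)                       -- neighbors
    (l : ι → ι → ℝ) (hl : ∀ i j, j ∈ N i → 0 < l i j)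
    (n : ι → ι → ℝ × ℝ)                      -- unit normals
    (g : ℝ) (hg : 0 < g)
    (z h θ : ι → ℝ)
    (hθ : ∀ i, θ i ∈ Set.Ioc (0:ℝ) 1)
    (hnonneg : ∀ i, 0 ≤ h i)
    (w : ι → ℝ) (hw : ∀ i, w i = g * (z i + h i))
    -- upwind-by-level interface value (θh)^s_{(i,j)}
    (s : ι → ι → ℝ)
    (hs : ∀ i j, s i j = if w i > w j then θ i * h i else θ j * h j)
    (I : Finset ι) (wbar : ℝ)
    (hlake : ∀ i ∈ I, w i = wbar)
    (hdry : ∀ i ∉ I, h i = 0 ∧ z i > wbar / g) :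
    ∀ i, (∑ j ∈ N i, (l i j * (w j - w i) * s i j) • n i j) = (0 : ℝ × ℝ) :=
  singular_lake_stationary_general N l n g hg z h θ w hw s hs I wbar hlake hdry
end

section
/- Discrete energy variation identity: for states (h_i^n, v_i^n) and (h_i^{n+1}, v_i^{n+1}) with cell energies E_i = θ_i((1/2)|v_i|² h_i + (1/2)g h_i² + g z_i h_i) and w_i = g(z_i + h_i^n), the total energy difference satisfies Σ_i σ_i(E_i^{n+1} - E_i^n) = Σ_i θ_i σ_i (h_i^{n+1}-h_i^n)(w_i^n - |v_i^n|²/2) + Σ_i θ_i σ_i ⟨(hv)_i^{n+1} - (hv)_i^n, v_i^n⟩ + g Σ_i θ_i σ_i (h_i^{n+1}-h_i^n)²/2 + Σ_i θ_i σ_i (h_i^{n+1}/2)|v_i^{n+1} - v_i^n|². -/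
/-!
Cell by cell, the kinetic part follows from expanding `‖v' - v‖²` and the potential part
`(g/2) h² + g z h` is a quadratic polynomial in `h`, whose exact Taylor expansion at `hⁿ` has
derivative `g (z + hⁿ) = w`; summing with the weights `θ σ` gives the identity.
-/

open RealInnerProductSpace

theorem kinetic_energy_variation {E : Type*} [NormedAddCommGroup E] [InnerProductSpace ℝ E]
    (h h' : ℝ) (v v' : E) :
    (1/2) * ‖v'‖^2 * h' - (1/2) * ‖v‖^2 * h
      = -((h' - h) * (‖v‖^2 / 2)) + ⟪h' • v' - h • v, v⟫ + h' / 2 * ‖v' - v‖^2 := by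
  rw [inner_sub_left, real_inner_smul_left, real_inner_smul_left, real_inner_self_eq_norm_sq,
    norm_sub_sq_real]
  ring

theorem potential_energy_variation (g z h h' : ℝ) :
    ((1/2) * g * h'^2 + g * z * h') - ((1/2) * g * h^2 + g * z * h)
      = (h' - h) * (g * (z + h)) + g * (h' - h)^2 / 2 := by
  ring

theorem discrete_energy_variation_general
    {ι : Type*} [Fintype ι]
    (σ θ z : ι → ℝ) (g : ℝ)
    (hn hn1 : ι → ℝ)
    (vn vn1 : ι → EuclideanSpace ℝ (Fin 2))
    (w : ι → ℝ) (hw : ∀ i, w i = g * (z i + hn i)) :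
    ∑ i, σ i * (θ i * ((1/2) * ‖vn1 i‖^2 * hn1 i + (1/2) * g * (hn1 i)^2 + g * z i * hn1 i))
      - ∑ i, σ i * (θ i * ((1/2) * ‖vn i‖^2 * hn i + (1/2) * g * (hn i)^2 + g * z i * hn i))
    = ∑ i, θ i * σ i * (hn1 i - hn i) * (w i - ‖vn i‖^2 / 2)
      + ∑ i, θ i * σ i * ⟪hn1 i • vn1 i - hn i • vn i, vn i⟫
      + g * ∑ i, θ i * σ i * (hn1 i - hn i)^2 / 2
      + ∑ i, θ i * σ i * (hn1 i / 2) * ‖vn1 i - vn i‖^2 := by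
  simp only [Finset.mul_sum, ← Finset.sum_sub_distrib, ← Finset.sum_add_distrib]
  refine Finset.sum_congr rfl fun i _ => ?_
  have kinetic := kinetic_energy_variation (hn i) (hn1 i) (vn i) (vn1 i)
  have potential := potential_energy_variation g (z i) (hn i) (hn1 i)
  rw [hw i]
  linear_combination σ i * θ i * (kinetic + potential)

/-- exact algebraic identity for the variation of the discrete total
energy between two consecutive time steps. -/
theorem discrete_energy_variation
    {ι : Type*} [Fintype ι]
    (σ θ z : ι → ℝ) (g : ℝ)
    (hσ : ∀ i, 0 < σ i) (hθ : ∀ i, θ i ∈ Set.Ioc (0:ℝ) 1) (hg : 0 < g)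
    (hn hn1 : ι → ℝ) (hhn : ∀ i, 0 ≤ hn i) (hhn1 : ∀ i, 0 ≤ hn1 i)
    (vn vn1 : ι → EuclideanSpace ℝ (Fin 2))
    (w : ι → ℝ) (hw : ∀ i, w i = g * (z i + hn i)) :
    ∑ i, σ i * (θ i * ((1/2) * ‖vn1 i‖^2 * hn1 i + (1/2) * g * (hn1 i)^2 + g * z i * hn1 i))
      - ∑ i, σ i * (θ i * ((1/2) * ‖vn i‖^2 * hn i + (1/2) * g * (hn i)^2 + g * z i * hn i))
    = ∑ i, θ i * σ i * (hn1 i - hn i) * (w i - ‖vn i‖^2 / 2)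
      + ∑ i, θ i * σ i * ⟪hn1 i • vn1 i - hn i • vn i, vn i⟫
      + g * ∑ i, θ i * σ i * (hn1 i - hn i)^2 / 2
      + ∑ i, θ i * σ i * (hn1 i / 2) * ‖vn1 i - vn i‖^2 :=
  discrete_energy_variation_general σ θ z g hn hn1 vn vn1 w hw
end

section
/- Thacker-type exact solution: let z(x) = c x² + bx + d with c > 0, τ ≥ 0 with τ² < 8gc (so the roots λ₁, λ₂ of λ² + τλ + 2gc = 0 are complex conjugate), and define ψ(t) = Aλ₂ e^{λ₁ t} + Bλ₁ e^{λ₂ t}, u(t) = A e^{λ₁ t} + B e^{λ₂ t} with A+B and i(A−B) real so u is real-valued with α = ∂_x z − x ∂²_x z evaluated consistently. Then h(t,x) + z(x) = (x/g − ψ(t)/(2gλ₁λ₂) + α/(λ₁λ₂))ψ(t) + η₀ together with velocity v(t,x) = u(t) solves the 1D shallow water equations ∂ₜh + ∂ₓ(hu) = 0 and ∂ₜ(hu) + ∂ₓ(hu²) + gh∂ₓ(z+h) = −hτu on the wet region {h > 0}, where λ₁λ₂ = g z'' = 2gc and λ₁ + λ₂ = −τ. -/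
/-!
Since the velocity does not depend on `x`, the mass equation is the transport equation
`∂ₜh + u ∂ₓh = 0`, and, given it, the momentum equation reduces to `h (u' + g ∂ₓ(z + h)) = -τ h u`.
For the Thacker surface `∂ₓ(z + h) = ψ / g`, so both reduce to the linear system
`ψ' = λ₁λ₂ u`, `u' = (λ₁ + λ₂) u - ψ`, which the exponentials `e^{λᵢ t}` solve.
-/

open Complex

section ShallowWater

variable {h : ℝ → ℝ → ℝ} {z u : ℝ → ℝ} {g τ t x hₜ hₓ u' η' : ℝ}

theorem shallowWater_of_hasDerivAt
    (hht : HasDerivAt (fun s => h s x) hₜ t) (hhx : HasDerivAt (h t) hₓ x)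
    (hu : HasDerivAt u u' t) (hη : HasDerivAt (fun s => z s + h t s) η' x)
    (hmass : hₜ + u t * hₓ = 0) (hmom : u' + g * η' = -τ * u t) :
    (deriv (fun s => h s x) t + deriv (fun s => h t s * u t) x = 0)
      ∧ (deriv (fun s => h s x * u s) t
          + deriv (fun s => h t s * (u t)^2) x
          + g * h t x * deriv (fun s => z s + h t s) x
        = -(h t x) * τ * u t) := by
  have hhu : HasDerivAt (fun s => h s x * u s) (hₜ * u t + h t x * u') t := hht.mul hu
  rw [hht.deriv, (hhx.mul_const _).deriv, hhu.deriv, (hhx.mul_const _).deriv, hη.deriv]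
  constructor
  · linear_combination hmass
  · linear_combination u t * hmass + h t x * hmom

end ShallowWater

theorem hasDerivAt_quadratic (c b d x : ℝ) :
    HasDerivAt (fun s => c * s ^ 2 + b * s + d) (2 * c * x + b) x := by
  refine ((((hasDerivAt_pow 2 x).const_mul c).add ((hasDerivAt_id x).const_mul b)).add_const d
    ).congr_deriv ?_
  norm_num
  ring

section ExponentialSystem

variable (A B l m : ℂ) (t : ℝ)

theorem hasDerivAt_re_add_mul_cexp :
    HasDerivAt (fun s : ℝ => (A * cexp (l * s) + B * cexp (m * s)).re)
      (A * l * cexp (l * t) + B * m * cexp (m * t)).re t := by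
  have hexp (k : ℂ) : HasDerivAt (fun s : ℝ => cexp (k * s)) (k * cexp (k * t)) t := by
    have hofReal : HasDerivAt (fun s : ℝ => (s : ℂ)) 1 t := ofRealCLM.hasDerivAt
    simpa only [mul_one, mul_comm] using (hofReal.const_mul k).cexp
  have hsum := ((hexp l).const_mul A).add ((hexp m).const_mul B)
  simp only [mul_assoc]
  exact reCLM.hasFDerivAt.comp_hasDerivAt t hsum

variable {A B l m}

theorem hasDerivAt_re_add_mul_cexp_of_mul_eq {p : ℝ} (hlm : l * m = p) :
    HasDerivAt (fun s : ℝ => (A * m * cexp (l * s) + B * l * cexp (m * s)).re)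
      (p * (A * cexp (l * t) + B * cexp (m * t)).re) t := by
  convert hasDerivAt_re_add_mul_cexp (A * m) (B * l) l m t using 1
  rw [← re_ofReal_mul, ← hlm]
  ring_nf

theorem hasDerivAt_re_add_mul_cexp_of_add_eq {σ : ℝ} (hlm : l + m = σ) :
    HasDerivAt (fun s : ℝ => (A * cexp (l * s) + B * cexp (m * s)).re)
      (σ * (A * cexp (l * t) + B * cexp (m * t)).re
        - (A * m * cexp (l * t) + B * l * cexp (m * t)).re) t := by
  convert hasDerivAt_re_add_mul_cexp A B l m t using 1
  rw [← re_ofReal_mul, ← sub_re, ← hlm]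
  ring_nf

end ExponentialSystem

section ThackerSurface

/-- The free surface `z + h` of the Thacker solution; `2 * g * c = λ₁λ₂`. -/
noncomputable def thackerSurface (g c b η₀ : ℝ) (ψ : ℝ → ℝ) (t x : ℝ) : ℝ :=
  (x / g - ψ t / (2 * g * (2 * g * c)) + b / (2 * g * c)) * ψ t + η₀

variable {g c b η₀ v t x : ℝ} {ψ : ℝ → ℝ}

theorem hasDerivAt_thackerSurface_time (hg : g ≠ 0) (hc : c ≠ 0)
    (hψ : HasDerivAt ψ (2 * g * c * v) t) :
    HasDerivAt (fun s => thackerSurface g c b η₀ ψ s x) (v * (2 * c * x + b - ψ t / g)) t := by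
  refine ((((hψ.div_const _).const_sub (x / g)).add_const (b / (2 * g * c))).mul hψ
    |>.add_const η₀).congr_deriv ?_
  field_simp
  ring

theorem hasDerivAt_thackerSurface_space :
    HasDerivAt (thackerSurface g c b η₀ ψ t) (ψ t / g) x := by
  refine ((((hasDerivAt_id x).div_const g).sub_const _).add_const _).mul_const (ψ t)
    |>.add_const η₀ |>.congr_deriv ?_
  ring

end ThackerSurface

theorem thacker_exact_solution_general
    (g c b d η₀ τ : ℝ) (A B lam1 lam2 : ℂ)
    (hg : 0 < g) (hc : 0 < c)
    (hvieta1 : lam1 * lam2 = ((2 * g * c : ℝ) : ℂ))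
    (hvieta2 : lam1 + lam2 = ((-τ : ℝ) : ℂ))
    (z : ℝ → ℝ) (hz : ∀ x, z x = c * x^2 + b * x + d)
    (u ψ : ℝ → ℝ)
    (hu : ∀ t, u t = (A * Complex.exp (lam1 * t) + B * Complex.exp (lam2 * t)).re)
    (hψ : ∀ t, ψ t = (A * lam2 * Complex.exp (lam1 * t)
                      + B * lam1 * Complex.exp (lam2 * t)).re)
    (h : ℝ → ℝ → ℝ)
    -- h + z = (x/g - ψ/(2g·λ₁λ₂) + α/(λ₁λ₂)) ψ + η₀, with λ₁λ₂ = 2gc and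
    -- α = ∂ₓz - x ∂²ₓz = b
    (hh : ∀ t x, h t x
      = (x / g - ψ t / (2 * g * (2 * g * c)) + b / (2 * g * c)) * ψ t + η₀ - z x) :
    ∀ t x, 0 < h t x →
      (deriv (fun s => h s x) t + deriv (fun s => h t s * u t) x = 0)
      ∧ (deriv (fun s => h s x * u s) t
          + deriv (fun s => h t s * (u t)^2) x
          + g * h t x * deriv (fun s => z s + h t s) x
        = -(h t x) * τ * u t) := by
  intro t x _
  have hψ' : HasDerivAt ψ (2 * g * c * u t) t := by
    rw [funext hψ, hu]
    exact hasDerivAt_re_add_mul_cexp_of_mul_eq t hvieta1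
  have hu' : HasDerivAt u (-τ * u t - ψ t) t := by
    rw [funext hu, hψ]
    exact hasDerivAt_re_add_mul_cexp_of_add_eq t hvieta2
  have hz' : HasDerivAt z (2 * c * x + b) x := by
    rw [funext hz]
    exact hasDerivAt_quadratic c b d x
  obtain rfl : h = fun t x => thackerSurface g c b η₀ ψ t x - z x := funext₂ hh
  have hsurface : HasDerivAt (thackerSurface g c b η₀ ψ t) (ψ t / g) x :=
    hasDerivAt_thackerSurface_space
  refine shallowWater_of_hasDerivAt (h := fun t x => thackerSurface g c b η₀ ψ t x - z x)
    ((hasDerivAt_thackerSurface_time hg.ne' hc.ne' hψ').sub_const (z x)) (hsurface.sub hz') hu'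
    ((hz'.add (hsurface.sub hz')).congr_deriv (add_sub_cancel _ _)) ?_ ?_
  · ring
  · field_simp
    ring

/-- Thacker-type exact solution of the 1D shallow water equations with
linear friction over a parabolic bottom z(x) = c x² + b x + d. -/
theorem thacker_exact_solution
    (g c b d η₀ τ : ℝ) (A B lam1 lam2 : ℂ)
    (hg : 0 < g) (hc : 0 < c) (hτ : 0 ≤ τ)
    (hdisc : τ^2 < 8 * g * c)
    -- λ₁, λ₂ are the (complex conjugate) roots of λ² + τλ + 2gc = 0
    (hroot1 : lam1^2 + (τ : ℂ) * lam1 + ((2 * g * c : ℝ) : ℂ) = 0)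
    (hroot2 : lam2^2 + (τ : ℂ) * lam2 + ((2 * g * c : ℝ) : ℂ) = 0)
    (hvieta1 : lam1 * lam2 = ((2 * g * c : ℝ) : ℂ))
    (hvieta2 : lam1 + lam2 = ((-τ : ℝ) : ℂ))
    -- A + B and i(A - B) real, so that u and ψ are real-valued
    (hAB1 : (A + B).im = 0) (hAB2 : (Complex.I * (A - B)).im = 0)
    (z : ℝ → ℝ) (hz : ∀ x, z x = c * x^2 + b * x + d)
    (u ψ : ℝ → ℝ)
    (hu : ∀ t, u t = (A * Complex.exp (lam1 * t) + B * Complex.exp (lam2 * t)).re)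
    (hψ : ∀ t, ψ t = (A * lam2 * Complex.exp (lam1 * t)
                      + B * lam1 * Complex.exp (lam2 * t)).re)
    (h : ℝ → ℝ → ℝ)
    -- h + z = (x/g - ψ/(2g·λ₁λ₂) + α/(λ₁λ₂)) ψ + η₀, with λ₁λ₂ = 2gc and
    -- α = ∂ₓz - x ∂²ₓz = b
    (hh : ∀ t x, h t x
      = (x / g - ψ t / (2 * g * (2 * g * c)) + b / (2 * g * c)) * ψ t + η₀ - z x) :
    ∀ t x, 0 < h t x →
      (deriv (fun s => h s x) t + deriv (fun s => h t s * u t) x = 0)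
      ∧ (deriv (fun s => h s x * u s) t
          + deriv (fun s => h t s * (u t)^2) x
          + g * h t x * deriv (fun s => z s + h t s) x
        = -(h t x) * τ * u t) :=
  thacker_exact_solution_general g c b d η₀ τ A B lam1 lam2 hg hc hvieta1 hvieta2 z hz u ψ hu hψ h
    hh
end
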